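/- arXiv:1103.5239 — 2 statements merged into one kernel-verified Lean document; each statement's English description precedes it below -/
import Mathlib

section
/- The Heawood graph admits no coherent 6-cycle orientation of level 4; that is, there is no choice, for each 6-cycle of the Heawood graph, of one of its two directions such that every path v_0, v_1, v_2, v_3 on 4 distinct vertices with consecutive vertices adjacent occurs as a consecutive segment of exactly one chosen directed 6-cycle. -/
/-!
Every directed path on four vertices of the Heawood graph lies on exactly two hexagons, so in a
coherent orientation the hexagon chosen in one direction forces the other hexagon through that path
to be chosen with the path traversed backwards (`Forces`). Following five such forcings from the
hexagon `0 1 2 3 4 5` leads back to the same hexagon in the opposite direction; reversing every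
cycle of the chain handles the other orientation, so neither direction of `0 1 2 3 4 5` can be
chosen.
-/

/-- A directed `g`-cycle of a simple graph `G`: an injective map `c : ZMod g → V`
with `c i` adjacent to `c (i+1)` for all `i`. -/
def IsDirCycleOn {V : Type*} (G : SimpleGraph V) (g : ℕ) (c : ZMod g → V) : Prop :=
  Function.Injective c ∧ ∀ i : ZMod g, G.Adj (c i) (c (i + 1))

/-- A sequence of `k` distinct vertices with consecutive vertices adjacent. -/
def IsPathSeq {V : Type*} (G : SimpleGraph V) (k : ℕ) (v : Fin k → V) : Prop :=
  Function.Injective v ∧ ∀ (j : ℕ) (h : j + 1 < k),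
    G.Adj (v ⟨j, Nat.lt_of_succ_lt h⟩) (v ⟨j + 1, h⟩)

/-- A coherent `g`-cycle orientation of level `k` of `G`: a set `D` of directed
`g`-cycles of `G` containing, for every `g`-cycle of `G`, exactly one of its two
directions (one representative up to rotation), and such that every sequence of `k`
distinct vertices `v 0, …, v (k-1)` with consecutive vertices adjacent occurs as a
consecutive segment `(c i, c (i+1), …, c (i+k-1))` of exactly one `c ∈ D`. -/
def IsCoherentOrientation {V : Type*} (G : SimpleGraph V) (g k : ℕ)
    (D : Set (ZMod g → V)) : Prop :=
  (∀ c ∈ D, IsDirCycleOn G g c) ∧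
  (∀ c : ZMod g → V, IsDirCycleOn G g c →
    ∃! c', c' ∈ D ∧
      ((∃ r : ZMod g, ∀ i, c' i = c (i + r)) ∨ (∃ r : ZMod g, ∀ i, c' i = c (r - i)))) ∧
  (∀ v : Fin k → V, IsPathSeq G k v →
    ∃! c, c ∈ D ∧ ∃ i : ZMod g, ∀ j : Fin k, c (i + ((j : ℕ) : ZMod g)) = v j)

/-- The Heawood graph: vertex set `ZMod 14`, `i` adjacent to `i+1`, together with the
extra edges `{2x, 2x+5}` for every `x`. -/
def heawoodGraph : SimpleGraph (ZMod 14) :=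
  SimpleGraph.fromRel (fun i j =>
    j = i + 1 ∨ ∃ x : ZMod 14, i = 2 * x ∧ j = 2 * x + 5)

def MemUpToRotation {V : Type*} {g : ℕ} (D : Set (ZMod g → V)) (v : ZMod g → V) : Prop :=
  ∃ c ∈ D, ∃ i, ∀ j, c (i + j) = v j

def Forces {V : Type*} (G : SimpleGraph V) (g k : ℕ) (v w : ZMod g → V) : Prop :=
  IsDirCycleOn G g w ∧ ∃ s t : ZMod g,
    ∀ u, IsDirCycleOn G g u → (∀ j : Fin k, u (s + (j : ℕ)) = w (s + (j : ℕ))) →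
      u = w ∨ u = fun x => v (t - x)

section

variable {V : Type*} {G : SimpleGraph V} {g k : ℕ}

instance [NeZero g] [DecidableEq V] [DecidableRel G.Adj] : DecidablePred (IsDirCycleOn G g) :=
  fun _ => inferInstanceAs (Decidable (_ ∧ _))

namespace IsDirCycleOn

variable {c : ZMod g → V}

theorem rotate (hc : IsDirCycleOn G g c) (r : ZMod g) : IsDirCycleOn G g fun i => c (r + i) :=
  ⟨fun _ _ h => add_left_cancel (hc.1 h), fun i => by simpa only [add_assoc] using hc.2 (r + i)⟩

theorem reverse (hc : IsDirCycleOn G g c) : IsDirCycleOn G g fun i => c (-i) :=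
  ⟨fun _ _ h => neg_injective (hc.1 h), fun i => by
    convert (hc.2 (-i - 1)).symm using 2 <;> ring⟩

theorem isPathSeq (hc : IsDirCycleOn G g c) (hk : k ≤ g) :
    IsPathSeq G k fun j : Fin k => c (j : ℕ) := by
  refine ⟨fun a b hab => Fin.ext ?_, fun j _ => by simpa using hc.2 j⟩
  have := (ZMod.natCast_eq_natCast_iff' _ _ _).1 (hc.1 hab)
  rwa [Nat.mod_eq_of_lt (by omega), Nat.mod_eq_of_lt (by omega)] at this

end IsDirCycleOn

theorem Forces.reverse {v w : ZMod g → V} (h : Forces G g k v w) :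
    Forces G g k (fun x => v (-x)) (fun x => w (-x)) := by
  obtain ⟨hw, s, t, hcompl⟩ := h
  set m : ZMod g := ((k - 1 : ℕ) : ZMod g)
  have hrev : ∀ j : Fin k, ((j.rev : ℕ) : ZMod g) = m - (j : ℕ) := by
    intro j
    rw [eq_sub_iff_add_eq, ← Nat.cast_add, Fin.val_rev]
    congr 1
    omega
  refine ⟨hw.reverse, -(s + m), -t, fun u hu hagree => ?_⟩
  have hagree' : ∀ j : Fin k, u (-(s + (j : ℕ))) = w (s + (j : ℕ)) := fun j => by
    convert hagree j.rev using 2 <;> rw [hrev] <;> ring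
  rcases hcompl (fun x => u (-x)) hu.reverse hagree' with h | h
  · exact Or.inl (funext fun x => by simpa using congrFun h (-x))
  · refine Or.inr (funext fun x => ?_)
    rw [show u x = v (t - -x) by simpa using congrFun h (-x)]
    congr 1
    ring

namespace IsCoherentOrientation

variable {D : Set (ZMod g → V)}

theorem memUpToRotation_or_reverse (hD : IsCoherentOrientation G g k D) {v : ZMod g → V}
    (hv : IsDirCycleOn G g v) : MemUpToRotation D v ∨ MemUpToRotation D fun j => v (-j) := by
  obtain ⟨c, ⟨hc, ⟨r, hr⟩ | ⟨r, hr⟩⟩, -⟩ := hD.2.1 v hv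
  · exact Or.inl ⟨c, hc, -r, fun j => by rw [hr, neg_add_cancel_comm]⟩
  · exact Or.inr ⟨c, hc, r, fun j => by rw [hr, sub_add_cancel_left]⟩

theorem not_memUpToRotation_reverse (hD : IsCoherentOrientation G g k D) (hg : 2 < g)
    {v : ZMod g → V} (hv : MemUpToRotation D v) (s : ZMod g) :
    ¬ MemUpToRotation D fun j => v (s - j) := by
  rintro ⟨c', hc', i', hi'⟩
  replace hi' : ∀ j, c' (i' + j) = v (s - j) := hi'
  obtain ⟨c, hc, i, hi⟩ := hv
  have hcyc := hD.1 c hc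
  -- `c'` and `c` represent the same undirected cycle, so `c` would be its own reversal.
  have hc'c : c' = c := by
    obtain ⟨w, -, hw⟩ := hD.2.1 c hcyc
    refine (hw c' ⟨hc', Or.inr ⟨i + s + i', fun x => ?_⟩⟩).trans
      (hw c ⟨hc, Or.inl ⟨0, fun x => by rw [add_zero]⟩⟩).symm
    rw [← sub_add_cancel x i', add_comm, hi', ← hi]
    congr 1
    ring
  have h01 : ∀ j : ZMod g, i' + j = i + (s - j) := fun j =>
    hcyc.1 ((hc'c ▸ hi' j).trans (hi _).symm)
  have htwo : ((2 : ℕ) : ZMod g) = 0 := by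
    linear_combination (h01 1) - (h01 0)
  rw [ZMod.natCast_eq_zero_iff] at htwo
  exact absurd (Nat.le_of_dvd two_pos htwo) (by omega)

theorem memUpToRotation_of_forces (hD : IsCoherentOrientation G g k D) (hg : 2 < g)
    (hk : k ≤ g) {v w : ZMod g → V} (hvw : Forces G g k v w) (hv : MemUpToRotation D v) :
    MemUpToRotation D w := by
  obtain ⟨hw, s, t, hcompl⟩ := hvw
  obtain ⟨c, ⟨hc, i, hci⟩, -⟩ := hD.2.2 _ ((hw.rotate s).isPathSeq hk)
  have hu : MemUpToRotation D fun x => c (i - s + x) := ⟨c, hc, i - s, fun _ => rfl⟩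
  rcases hcompl _ ((hD.1 c hc).rotate (i - s)) fun j => by
      simp only [← hci j]
      congr 1
      ring
    with h | h
  · exact h ▸ hu
  · exact absurd (h ▸ hu) (hD.not_memUpToRotation_reverse hg hv t)

theorem memUpToRotation_of_reflTransGen (hD : IsCoherentOrientation G g k D) (hg : 2 < g)
    (hk : k ≤ g) {v w : ZMod g → V} (hvw : Relation.ReflTransGen (Forces G g k) v w)
    (hv : MemUpToRotation D v) :
    MemUpToRotation D w := by
  induction hvw with
  | refl => exact hv
  | tail _ h ih => exact hD.memUpToRotation_of_forces hg hk h ih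

end IsCoherentOrientation

end

def tuple6 {V : Type*} (a b c d e f : V) : ZMod 6 → V := ![a, b, c, d, e, f]

theorem eq_tuple6 {V : Type*} (u : ZMod 6 → V) :
    u = tuple6 (u 0) (u 1) (u 2) (u 3) (u 4) (u 5) :=
  funext fun x => by fin_cases x <;> rfl

theorem forces_of_forall_tuple6 {V : Type*} {G : SimpleGraph V} {v w : ZMod 6 → V}
    (hw : IsDirCycleOn G 6 w) (t : ZMod 6)
    (hext : ∀ a b, IsDirCycleOn G 6 (tuple6 (w 0) (w 1) (w 2) (w 3) a b) →
      tuple6 (w 0) (w 1) (w 2) (w 3) a b = w ∨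
        tuple6 (w 0) (w 1) (w 2) (w 3) a b = fun x => v (t - x)) :
    Forces G 6 4 v w := by
  refine ⟨hw, 0, t, fun u hu hagree => ?_⟩
  obtain ⟨h0, h1, h2, h3⟩ : u 0 = w 0 ∧ u 1 = w 1 ∧ u 2 = w 2 ∧ u 3 = w 3 := by
    simpa using And.intro (hagree 0) (And.intro (hagree 1) (And.intro (hagree 2) (hagree 3)))
  rw [eq_tuple6 u, h0, h1, h2, h3] at hu ⊢
  exact hext _ _ hu

theorem heawoodGraph_adj_iff {a b : ZMod 14} : heawoodGraph.Adj a b ↔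
    b = a + 1 ∨ a = b + 1 ∨ (a.val % 2 = 0 ∧ b = a + 5) ∨
      (b.val % 2 = 0 ∧ a = b + 5) := by
  have heven : ∀ a : ZMod 14, (∃ x, a = 2 * x) ↔ a.val % 2 = 0 := by decide
  rw [heawoodGraph, SimpleGraph.fromRel_adj]
  revert a b
  simp only [← heven]
  decide

instance : DecidableRel heawoodGraph.Adj := fun _ _ => decidable_of_iff _ heawoodGraph_adj_iff.symm

-- Each hexagon begins with four consecutive vertices of its predecessor, in reverse order.
theorem heawood_forcing_chain : Relation.ReflTransGen (Forces heawoodGraph 6 4)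
    (tuple6 0 1 2 3 4 5) fun j => tuple6 0 1 2 3 4 5 (4 - j) :=
  .tail (.tail (.tail (.tail (.single
    (forces_of_forall_tuple6 (w := tuple6 3 2 1 0 13 12) (by decide) 3 (by decide)))
    (forces_of_forall_tuple6 (w := tuple6 13 0 1 2 7 8) (by decide) 4 (by decide)))
    (forces_of_forall_tuple6 (w := tuple6 8 7 2 1 10 9) (by decide) 5 (by decide)))
    (forces_of_forall_tuple6 (w := tuple6 9 10 1 2 3 4) (by decide) 5 (by decide)))
    (forces_of_forall_tuple6 (by decide) 5 (by decide))

/-- The Heawood graph admits no coherent 6-cycle orientation of level 4. -/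
theorem heawood_no_coherent_orientation :
    ¬ ∃ D : Set (ZMod 6 → ZMod 14), IsCoherentOrientation heawoodGraph 6 4 D := by
  rintro ⟨D, hD⟩
  rcases hD.memUpToRotation_or_reverse (v := tuple6 0 1 2 3 4 5) (by decide) with h | h
  · exact hD.not_memUpToRotation_reverse (by norm_num) h 4
      (hD.memUpToRotation_of_reflTransGen (by norm_num) (by norm_num) heawood_forcing_chain h)
  · have h' := hD.memUpToRotation_of_reflTransGen (by norm_num) (by norm_num)
      (heawood_forcing_chain.lift _ fun _ _ => Forces.reverse) h
    refine hD.not_memUpToRotation_reverse (by norm_num) h (-4) ?_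
    convert h' using 4
    ring
end

section
/- In the Heawood graph, every path on 4 distinct vertices v_0, v_1, v_2, v_3 (with consecutive vertices adjacent) lies on exactly two cycles of length 6. -/
/-- Two directed `g`-cycles are related iff one is a rotation of the other or a
rotation of the reversal of the other; the quotient by this relation is the set of
(undirected) `g`-cycles of `G`. -/
def DirCycleRel {V : Type*} (G : SimpleGraph V) (g : ℕ)
    (c c' : {c : ZMod g → V // IsDirCycleOn G g c}) : Prop :=
  (∃ r : ZMod g, ∀ i, c'.1 i = c.1 (i + r)) ∨ (∃ r : ZMod g, ∀ i, c'.1 i = c.1 (r - i))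

/-! A hexagon through the path `v₀v₁v₂v₃` has exactly one directed representative beginning with
`v₀, v₁, v₂, v₃`: a rotation brings the path to the front, and a reflection fixing `v₀` would send
`v₁` from position `1` to position `-1`. Such a representative is determined by its last two
vertices `(e, f)`, with `e` a neighbour of `v₃` and `f` a neighbour of `v₀`, so in the cubic
Heawood graph the count reduces to a finite check over the `168` paths on four vertices.
Geometrically, the Heawood graph is the incidence graph of the Fano plane, `v₀` and `v₃` are a
non-incident point and line, and the two hexagons come from the two points of `v₃` other than `v₂`. -/

instance inst_s14 : DecidableRel heawoodGraph.Adj := fun a b =>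
  decidable_of_iff _ (SimpleGraph.fromRel_adj _ a b).symm

instance {V : Type*} [DecidableEq V] (G : SimpleGraph V) [DecidableRel G.Adj] (g : ℕ) [NeZero g]
    (c : ZMod g → V) : Decidable (IsDirCycleOn G g c) :=
  inferInstanceAs (Decidable (_ ∧ _))

section DirCycles

variable {V : Type*} {G : SimpleGraph V} {g : ℕ}

theorem dirCycleRel_equivalence (G : SimpleGraph V) (g : ℕ) : Equivalence (DirCycleRel G g) where
  refl _ := Or.inl ⟨0, fun i => by rw [add_zero]⟩
  symm := by
    rintro c c' (⟨r, h⟩ | ⟨r, h⟩)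
    · exact Or.inl ⟨-r, fun i => by rw [h]; ring_nf⟩
    · exact Or.inr ⟨r, fun i => by rw [h]; ring_nf⟩
  trans := by
    rintro c c' c'' (⟨r, h⟩ | ⟨r, h⟩) (⟨s, h'⟩ | ⟨s, h'⟩)
    · exact Or.inl ⟨s + r, fun i => by rw [h', h]; ring_nf⟩
    · exact Or.inr ⟨s + r, fun i => by rw [h', h]; ring_nf⟩
    · exact Or.inr ⟨r - s, fun i => by rw [h', h]; ring_nf⟩
    · exact Or.inl ⟨r - s, fun i => by rw [h', h]; ring_nf⟩

theorem IsDirCycleOn.rotate_s14 {c : ZMod g → V} (hc : IsDirCycleOn G g c) (r : ZMod g) :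
    IsDirCycleOn G g (fun i => c (r + i)) :=
  ⟨fun _ _ h => add_left_cancel (hc.1 h), fun i => by simpa only [add_assoc] using hc.2 (r + i)⟩

theorem DirCycleRel.eq_of_apply_zero_of_apply_one (hg : 2 < g)
    {c c' : {c : ZMod g → V // IsDirCycleOn G g c}} (h : DirCycleRel G g c c')
    (h₀ : c'.1 0 = c.1 0) (h₁ : c'.1 1 = c.1 1) : c = c' := by
  have : Fact (2 < g) := ⟨hg⟩
  rcases h with ⟨r, h⟩ | ⟨r, h⟩
  · obtain rfl : r = 0 := c.2.1 (by rw [← h₀, h, zero_add])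
    exact Subtype.ext (funext fun i => by rw [h, add_zero])
  · obtain rfl : r = 0 := c.2.1 (by rw [← h₀, h, sub_zero])
    have h₁' : c.1 (0 - 1) = c.1 1 := by rw [← h, h₁]
    exact (ZMod.neg_one_ne_one (by simpa using c.2.1 h₁')).elim

theorem card_cycles_through_eq_card_dirCycles_from (hg : 2 < g) {k : ℕ} (hk : 2 ≤ k)
    (v : Fin k → V) :
    Nat.card {q : Quot (DirCycleRel G g) //
      ∃ c : {c : ZMod g → V // IsDirCycleOn G g c},
        q = Quot.mk _ c ∧ ∃ i : ZMod g, ∀ j : Fin k, c.1 (i + ((j : ℕ) : ZMod g)) = v j} =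
      Nat.card {c : ZMod g → V // IsDirCycleOn G g c ∧ ∀ j : Fin k, c ((j : ℕ) : ZMod g) = v j} := by
  symm
  refine Nat.card_congr (Equiv.ofBijective
    (fun c => ⟨Quot.mk _ ⟨c.1, c.2.1⟩, ⟨c.1, c.2.1⟩, rfl, 0, fun j => by rw [zero_add, c.2.2]⟩)
    ⟨fun c c' hcc' => ?_, fun ⟨q, c, hq, i, hi⟩ => ?_⟩)
  · have hrel := (Equivalence.eqvGen_iff (dirCycleRel_equivalence G g)).mp
      (Quot.eq.mp (congrArg Subtype.val hcc'))
    have key := hrel.eq_of_apply_zero_of_apply_one hg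
      (by simpa using (c'.2.2 ⟨0, by omega⟩).trans (c.2.2 ⟨0, by omega⟩).symm)
      (by simpa using (c'.2.2 ⟨1, hk⟩).trans (c.2.2 ⟨1, hk⟩).symm)
    exact Subtype.ext (congrArg Subtype.val key :)
  · refine ⟨⟨fun x => c.1 (i + x), c.2.rotate_s14 i, hi⟩, Subtype.ext ?_⟩
    change Quot.mk _ _ = q
    rw [hq]
    exact Quot.sound (Or.inl ⟨-i, fun x => by simp⟩)

end DirCycles

section Hexagons

variable {V : Type*} {G : SimpleGraph V}

def hexagon (a b c d e f : V) : ZMod 6 → V := ![a, b, c, d, e, f]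

theorem card_dirHexagons_from_eq_card_closing_pairs (v : Fin 4 → V) :
    Nat.card {c : ZMod 6 → V // IsDirCycleOn G 6 c ∧ ∀ j : Fin 4, c ((j : ℕ) : ZMod 6) = v j} =
      Nat.card {ef : V × V // IsDirCycleOn G 6 (hexagon (v 0) (v 1) (v 2) (v 3) ef.1 ef.2)} := by
  have hexagon_eq (c : {c : ZMod 6 → V // IsDirCycleOn G 6 c ∧
      ∀ j : Fin 4, c ((j : ℕ) : ZMod 6) = v j}) :
      hexagon (v 0) (v 1) (v 2) (v 3) (c.1 4) (c.1 5) = c.1 := by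
    funext i
    fin_cases i
    exacts [(c.2.2 0).symm, (c.2.2 1).symm, (c.2.2 2).symm, (c.2.2 3).symm, rfl, rfl]
  exact Nat.card_congr
    { toFun := fun c => ⟨(c.1 4, c.1 5), (hexagon_eq c).symm ▸ c.2.1⟩
      invFun := fun ef => ⟨_, ef.2, fun j => by fin_cases j <;> rfl⟩
      left_inv := fun c => Subtype.ext (hexagon_eq c)
      right_inv := fun _ => rfl }

end Hexagons

-- Restricting `(e, f)` to neighbours of `d` and `a` keeps this kernel computation small.
theorem heawoodGraph_card_closing_pairs_in_neighborFinsets :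
    ∀ a : ZMod 14, ∀ b ∈ heawoodGraph.neighborFinset a, ∀ c ∈ heawoodGraph.neighborFinset b,
      ∀ d ∈ heawoodGraph.neighborFinset c, a ≠ c → b ≠ d → a ≠ d →
        ((heawoodGraph.neighborFinset d ×ˢ heawoodGraph.neighborFinset a).filter
          fun ef => IsDirCycleOn heawoodGraph 6 (hexagon a b c d ef.1 ef.2)).card = 2 := by
  decide +kernel

theorem heawoodGraph_card_closing_pairs {a b c d : ZMod 14} (hab : heawoodGraph.Adj a b)
    (hbc : heawoodGraph.Adj b c) (hcd : heawoodGraph.Adj c d) (hac : a ≠ c) (hbd : b ≠ d)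
    (had : a ≠ d) :
    Nat.card {ef : ZMod 14 × ZMod 14 // IsDirCycleOn heawoodGraph 6 (hexagon a b c d ef.1 ef.2)} =
      2 := by
  rw [Nat.card_eq_fintype_card, Fintype.card_subtype,
    ← heawoodGraph_card_closing_pairs_in_neighborFinsets a b (by simpa using hab) c
      (by simpa using hbc) d (by simpa using hcd) hac hbd had]
  congr 1
  ext ⟨e, f⟩
  simp only [Finset.mem_filter, Finset.mem_univ, true_and, Finset.mem_product,
    SimpleGraph.mem_neighborFinset, iff_and_self]
  exact fun h => ⟨h.2 3, (h.2 5).symm⟩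

/-- In the Heawood graph, every path on 4 distinct vertices lies on exactly two
cycles of length 6 (a path lies on a cycle iff its vertices occur consecutively,
in one of the two directions, along the cycle). -/
theorem heawood_path_on_two_hexagons (v : Fin 4 → ZMod 14)
    (hv : IsPathSeq heawoodGraph 4 v) :
    Nat.card {q : Quot (DirCycleRel heawoodGraph 6) //
      ∃ c : {c : ZMod 6 → ZMod 14 // IsDirCycleOn heawoodGraph 6 c},
        q = Quot.mk _ c ∧ ∃ i : ZMod 6, ∀ j : Fin 4, c.1 (i + ((j : ℕ) : ZMod 6)) = v j}
      = 2 := by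
  rw [card_cycles_through_eq_card_dirCycles_from (by norm_num) (by norm_num),
    card_dirHexagons_from_eq_card_closing_pairs]
  obtain ⟨hinj, hadj⟩ := hv
  exact heawoodGraph_card_closing_pairs (hadj 0 (by norm_num)) (hadj 1 (by norm_num))
    (hadj 2 (by norm_num)) (hinj.ne (by decide)) (hinj.ne (by decide)) (hinj.ne (by decide))
end
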